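/- arXiv:2511.08776 — 8 statements merged into one kernel-verified Lean document; each statement's English description precedes it below -/
import Mathlib

section
/- Let ρ : ℝ → (0,∞) be a smooth positive periodic function on the torus 𝕋, and let φ, μ be smooth functions on (0,∞) with μ'(ρ) = ρ φ'(ρ), and define κ(ρ) = (μ'(ρ))²/ρ. Then pointwise one has the identity ρ ∂ₓ( ∂ₓ(κ(ρ) ∂ₓρ) − (κ'(ρ)/2) |∂ₓρ|² ) = ∂ₓ( ρ μ'(ρ) ∂ₓ²(φ(ρ)) ). -/
/-- First-variation identity for the Korteweg energy: pointwise,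
`ρ ∂ₓ( ∂ₓ(κ(ρ)∂ₓρ) − (κ'(ρ)/2)|∂ₓρ|² ) = ∂ₓ( ρ μ'(ρ) ∂ₓ²(φ(ρ)) )`. -/
theorem stmt0 (ρ φ μ κ : ℝ → ℝ)
    (hρ : ContDiff ℝ (⊤ : ℕ∞) ρ) (hpos : ∀ x, 0 < ρ x) (hper : Function.Periodic ρ 1)
    (hφ : ContDiffOn ℝ (⊤ : ℕ∞) φ (Set.Ioi 0)) (hμ : ContDiffOn ℝ (⊤ : ℕ∞) μ (Set.Ioi 0))
    (hφmono : StrictMonoOn φ (Set.Ioi 0))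
    (hμ' : ∀ s > (0:ℝ), deriv μ s = s * deriv φ s)
    (hκ : ∀ s > (0:ℝ), κ s = (deriv μ s) ^ 2 / s) :
    ∀ x : ℝ,
      ρ x * deriv (fun y =>
          deriv (fun z => κ (ρ z) * deriv ρ z) y
            - deriv κ (ρ y) / 2 * (deriv ρ y) ^ 2) x
        = deriv (fun y => ρ y * deriv μ (ρ y) * deriv (deriv (fun z => φ (ρ z))) y) x := by
  intro x
  set p := deriv φ with hp_def
  set q := deriv p with hq_def
  -- smoothness of derivatives of ρ
  obtain ⟨hρdiff, hAsmooth⟩ := contDiff_infty_iff_deriv.mp (hρ.of_le (by simp))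
  obtain ⟨hAdiff, hBsmooth⟩ := contDiff_infty_iff_deriv.mp hAsmooth
  obtain ⟨hBdiff, -⟩ := contDiff_infty_iff_deriv.mp hBsmooth
  -- smoothness of derivatives of φ on (0,∞)
  obtain ⟨hφdiff, hpsmooth⟩ :=
    (contDiffOn_infty_iff_deriv_of_isOpen isOpen_Ioi).mp (hφ.of_le (by simp))
  obtain ⟨hpdiff, hqsmooth⟩ :=
    (contDiffOn_infty_iff_deriv_of_isOpen isOpen_Ioi).mp hpsmooth
  obtain ⟨hqdiff, -⟩ :=
    (contDiffOn_infty_iff_deriv_of_isOpen isOpen_Ioi).mp hqsmooth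
  have hn : ∀ z : ℝ, Set.Ioi (0:ℝ) ∈ nhds (ρ z) := fun z => isOpen_Ioi.mem_nhds (hpos z)
  -- pointwise derivatives
  have hρd : ∀ z : ℝ, HasDerivAt ρ (deriv ρ z) z := fun z =>
    (hρdiff z).hasDerivAt
  have hAd : ∀ z : ℝ, HasDerivAt (deriv ρ) (deriv (deriv ρ) z) z := fun z =>
    (hAdiff z).hasDerivAt
  have hBd : ∀ z : ℝ, HasDerivAt (deriv (deriv ρ)) (deriv (deriv (deriv ρ)) z) z := fun z =>
    (hBdiff z).hasDerivAt
  have hφd : ∀ z : ℝ, HasDerivAt φ (p (ρ z)) (ρ z) := fun z =>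
    (hφdiff.differentiableAt (hn z)).hasDerivAt
  have hpd : ∀ z : ℝ, HasDerivAt p (q (ρ z)) (ρ z) := fun z =>
    (hpdiff.differentiableAt (hn z)).hasDerivAt
  have hqd : ∀ z : ℝ, HasDerivAt q (deriv q (ρ z)) (ρ z) := fun z =>
    (hqdiff.differentiableAt (hn z)).hasDerivAt
  -- chain rules
  have hφρ : ∀ z : ℝ, HasDerivAt (fun y => φ (ρ y)) (p (ρ z) * deriv ρ z) z := fun z =>
    (hφd z).comp z (hρd z)
  have hpρ : ∀ z : ℝ, HasDerivAt (fun y => p (ρ y)) (q (ρ z) * deriv ρ z) z := fun z =>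
    (hpd z).comp z (hρd z)
  have hqρ : ∀ z : ℝ, HasDerivAt (fun y => q (ρ y)) (deriv q (ρ z) * deriv ρ z) z := fun z =>
    (hqd z).comp z (hρd z)
  -- κ facts
  have hκeq : ∀ s ∈ Set.Ioi (0:ℝ), κ s = s * p s ^ 2 := by
    intro s hs
    rw [hκ s hs, hμ' s hs]
    rw [div_eq_iff (ne_of_gt (show (0:ℝ) < s from hs))]
    ring
  have hκd : ∀ z : ℝ,
      HasDerivAt κ (p (ρ z) ^ 2 + 2 * ρ z * p (ρ z) * q (ρ z)) (ρ z) := by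
    intro z
    have hmodel : HasDerivAt (fun s => s * p s ^ 2)
        (p (ρ z) ^ 2 + 2 * ρ z * p (ρ z) * q (ρ z)) (ρ z) := by
      have := (show HasDerivAt (fun s => id s * p s ^ 2) _ (ρ z) from
        (hasDerivAt_id (ρ z)).mul ((hpd z).pow 2))
      simp only [id_eq] at this
      convert this using 1
      push_cast
      ring
    have hev : κ =ᶠ[nhds (ρ z)] fun s => s * p s ^ 2 :=
      Filter.eventually_of_mem (hn z) hκeq
    exact hmodel.congr_of_eventuallyEq hev
  have hdκ : ∀ z : ℝ, deriv κ (ρ z) = p (ρ z) ^ 2 + 2 * ρ z * p (ρ z) * q (ρ z) :=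
    fun z => (hκd z).deriv
  -- chain rule for κ ∘ ρ times deriv ρ
  have hD1 : deriv (fun z => κ (ρ z) * deriv ρ z)
      = fun z => (p (ρ z) ^ 2 + 2 * ρ z * p (ρ z) * q (ρ z)) * (deriv ρ z) ^ 2
          + ρ z * p (ρ z) ^ 2 * deriv (deriv ρ) z := by
    have hfun1 : (fun z => κ (ρ z) * deriv ρ z) = fun z => ρ z * p (ρ z) ^ 2 * deriv ρ z :=
      funext fun z => by rw [hκeq (ρ z) (hpos z)]
    rw [hfun1]
    funext z
    rw [(show HasDerivAt (fun z => ρ z * p (ρ z) ^ 2 * deriv ρ z) _ z from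
      (((hρd z).mul ((hpρ z).pow 2)).mul (hAd z))).deriv]
    simp only [Pi.mul_apply, Pi.pow_apply]
    push_cast
    ring
  -- LHS inner function
  have hLfun : (fun y => deriv (fun z => κ (ρ z) * deriv ρ z) y
        - deriv κ (ρ y) / 2 * (deriv ρ y) ^ 2)
      = fun y => (p (ρ y) ^ 2 / 2 + ρ y * p (ρ y) * q (ρ y)) * (deriv ρ y) ^ 2
          + ρ y * p (ρ y) ^ 2 * deriv (deriv ρ) y := by
    funext y
    simp only [hD1, hdκ y]
    ring
  -- RHS inner functions
  have hφfun : deriv (fun z => φ (ρ z)) = fun z => p (ρ z) * deriv ρ z :=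
    funext fun z => (hφρ z).deriv
  have hD3 : deriv (deriv (fun z => φ (ρ z)))
      = fun z => q (ρ z) * (deriv ρ z) ^ 2 + p (ρ z) * deriv (deriv ρ) z := by
    rw [hφfun]
    funext z
    rw [(show HasDerivAt (fun z => p (ρ z) * deriv ρ z) _ z from ((hpρ z).mul (hAd z))).deriv]
    ring
  have hRfun : (fun y => ρ y * deriv μ (ρ y) * deriv (deriv (fun z => φ (ρ z))) y)
      = fun y => ρ y * (ρ y * p (ρ y))
          * (q (ρ y) * (deriv ρ y) ^ 2 + p (ρ y) * deriv (deriv ρ) y) := by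
    funext y
    rw [hμ' (ρ y) (hpos y)]
    simp only [hD3]
  rw [hLfun, hRfun]
  -- final derivatives
  have hL : HasDerivAt (fun y => (p (ρ y) ^ 2 / 2 + ρ y * p (ρ y) * q (ρ y)) * (deriv ρ y) ^ 2
        + ρ y * p (ρ y) ^ 2 * deriv (deriv ρ) y)
      (((((2:ℕ):ℝ) * p (ρ x) ^ (2-1) * (q (ρ x) * deriv ρ x)) / 2
          + ((deriv ρ x * p (ρ x) + ρ x * (q (ρ x) * deriv ρ x)) * q (ρ x)
            + ρ x * p (ρ x) * (deriv q (ρ x) * deriv ρ x))) * (deriv ρ x) ^ 2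
        + (p (ρ x) ^ 2 / 2 + ρ x * p (ρ x) * q (ρ x))
            * (((2:ℕ):ℝ) * deriv ρ x ^ (2-1) * deriv (deriv ρ) x)
        + ((deriv ρ x * p (ρ x) ^ 2
            + ρ x * (((2:ℕ):ℝ) * p (ρ x) ^ (2-1) * (q (ρ x) * deriv ρ x)))
              * deriv (deriv ρ) x
          + ρ x * p (ρ x) ^ 2 * deriv (deriv (deriv ρ)) x)) x := by
    exact ((((((hpρ x).pow 2).div_const 2).add (((hρd x).mul (hpρ x)).mul (hqρ x))).mul
      ((hAd x).pow 2)).add (((hρd x).mul ((hpρ x).pow 2)).mul (hBd x)))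
  have hR : HasDerivAt (fun y => ρ y * (ρ y * p (ρ y))
        * (q (ρ y) * (deriv ρ y) ^ 2 + p (ρ y) * deriv (deriv ρ) y))
      ((deriv ρ x * (ρ x * p (ρ x))
          + ρ x * (deriv ρ x * p (ρ x) + ρ x * (q (ρ x) * deriv ρ x)))
          * (q (ρ x) * (deriv ρ x) ^ 2 + p (ρ x) * deriv (deriv ρ) x)
        + ρ x * (ρ x * p (ρ x))
          * ((deriv q (ρ x) * deriv ρ x * deriv ρ x ^ 2
              + q (ρ x) * (((2:ℕ):ℝ) * deriv ρ x ^ (2-1) * deriv (deriv ρ) x))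
            + ((q (ρ x) * deriv ρ x) * deriv (deriv ρ) x
              + p (ρ x) * deriv (deriv (deriv ρ)) x))) x := by
    exact (((hρd x).mul ((hρd x).mul (hpρ x))).mul
      (((hqρ x).mul ((hAd x).pow 2)).add ((hpρ x).mul (hBd x))))
  rw [hL.deriv, hR.deriv]
  push_cast
  ring
end

section
/- Let ρ : 𝕋 → (0,∞) be a smooth positive function on the one-dimensional torus, φ smooth on (0,∞), μ' (s) = s φ'(s), κ(s) = (μ'(s))²/s. Then ∫_𝕋 ( ∂ₓ(κ(ρ)∂ₓρ) − (κ'(ρ)/2)|∂ₓρ|² ) ∂ₓ²(μ(ρ)) dx = ∫_𝕋 ρ μ'(ρ) |∂ₓ²(φ(ρ))|² dx. -/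
/-- Integral first-variation identity for the Korteweg energy on the torus. -/
theorem stmt1 (ρ φ μ κ : ℝ → ℝ)
    (hρ : ContDiff ℝ (⊤ : ℕ∞) ρ) (hpos : ∀ x, 0 < ρ x) (hper : Function.Periodic ρ 1)
    (hφ : ContDiffOn ℝ (⊤ : ℕ∞) φ (Set.Ioi 0)) (hμ : ContDiffOn ℝ (⊤ : ℕ∞) μ (Set.Ioi 0))
    (hμ' : ∀ s > (0:ℝ), deriv μ s = s * deriv φ s)
    (hκ : ∀ s > (0:ℝ), κ s = (deriv μ s) ^ 2 / s) :
    ∫ x in (0:ℝ)..1,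
        (deriv (fun z => κ (ρ z) * deriv ρ z) x
            - deriv κ (ρ x) / 2 * (deriv ρ x) ^ 2)
          * deriv (deriv (fun z => μ (ρ z))) x
      = ∫ x in (0:ℝ)..1,
          ρ x * deriv μ (ρ x) * (deriv (deriv (fun z => φ (ρ z))) x) ^ 2 := by
  have hρ' : ContDiff ℝ (⊤ : ℕ∞) ρ := hρ.of_le (by simp)
  have hφ' : ContDiffOn ℝ (⊤ : ℕ∞) φ (Set.Ioi 0) := hφ.of_le (by simp)
  have hμ'' : ContDiffOn ℝ (⊤ : ℕ∞) μ (Set.Ioi 0) := hμ.of_le (by simp)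
  have hρd : Differentiable ℝ ρ := hρ'.differentiable (by simp)
  have hρ1 : ContDiff ℝ (⊤ : ℕ∞) (deriv ρ) := (contDiff_infty_iff_deriv.mp hρ').2
  have hρ1d : Differentiable ℝ (deriv ρ) := hρ1.differentiable (by simp)
  have hρ2c : Continuous (deriv (deriv ρ)) :=
    ((contDiff_infty_iff_deriv.mp hρ1).2).continuous
  have hφ1 : ContDiffOn ℝ (⊤ : ℕ∞) (deriv φ) (Set.Ioi 0) :=
    hφ'.deriv_of_isOpen isOpen_Ioi (by exact_mod_cast le_top)
  have hφ2 : ContDiffOn ℝ (⊤ : ℕ∞) (deriv (deriv φ)) (Set.Ioi 0) :=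
    hφ1.deriv_of_isOpen isOpen_Ioi (by exact_mod_cast le_top)
  -- pointwise HasDerivAt facts
  have Hρ : ∀ x : ℝ, HasDerivAt ρ (deriv ρ x) x := fun x => (hρd x).hasDerivAt
  have Hρ1 : ∀ x : ℝ, HasDerivAt (deriv ρ) (deriv (deriv ρ) x) x := fun x => (hρ1d x).hasDerivAt
  have Hφ : ∀ x : ℝ, HasDerivAt φ (deriv φ (ρ x)) (ρ x) := fun x =>
    ((hφ'.contDiffAt (isOpen_Ioi.mem_nhds (hpos x))).differentiableAt
      (by simp)).hasDerivAt
  have Hφ' : ∀ x : ℝ, HasDerivAt (deriv φ) (deriv (deriv φ) (ρ x)) (ρ x) := fun x =>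
    ((hφ1.contDiffAt (isOpen_Ioi.mem_nhds (hpos x))).differentiableAt
      (by simp)).hasDerivAt
  have Hμ : ∀ x : ℝ, HasDerivAt μ (deriv μ (ρ x)) (ρ x) := fun x =>
    ((hμ''.contDiffAt (isOpen_Ioi.mem_nhds (hpos x))).differentiableAt
      (by simp)).hasDerivAt
  have HA : ∀ x : ℝ, HasDerivAt (fun z => deriv φ (ρ z)) (deriv (deriv φ) (ρ x) * deriv ρ x) x :=
    fun x => (Hφ' x).comp x (Hρ x)
  -- function equalities for the inner derivatives
  have E1 : deriv (fun z => φ (ρ z)) = fun z => deriv φ (ρ z) * deriv ρ z := by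
    funext x
    exact ((Hφ x).comp x (Hρ x)).deriv
  have E2 : deriv (fun z => μ (ρ z)) = fun z => ρ z * deriv φ (ρ z) * deriv ρ z := by
    funext x
    have h : deriv (fun z => μ (ρ z)) x = deriv μ (ρ x) * deriv ρ x :=
      ((Hμ x).comp x (Hρ x)).deriv
    rw [h, hμ' _ (hpos x)]
  have E3 : (fun z => κ (ρ z) * deriv ρ z)
      = fun z => ρ z * (deriv φ (ρ z)) ^ 2 * deriv ρ z := by
    funext x
    rw [hκ _ (hpos x), hμ' _ (hpos x)]
    field_simp [(hpos x).ne']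
  -- second derivatives
  have Hf2 : ∀ x : ℝ, deriv (deriv (fun z => φ (ρ z))) x
      = deriv (deriv φ) (ρ x) * (deriv ρ x) ^ 2 + deriv φ (ρ x) * deriv (deriv ρ) x := by
    intro x
    rw [E1]
    have h2 : HasDerivAt (fun z => deriv φ (ρ z) * deriv ρ z)
        (deriv (deriv φ) (ρ x) * (deriv ρ x) ^ 2 + deriv φ (ρ x) * deriv (deriv ρ) x) x := by
      have h := (HA x).mul (Hρ1 x)
      refine h.congr_deriv ?_
      ring
    exact h2.deriv
  have Hm2 : ∀ x : ℝ, deriv (deriv (fun z => μ (ρ z))) x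
      = deriv φ (ρ x) * (deriv ρ x) ^ 2
        + ρ x * deriv (deriv φ) (ρ x) * (deriv ρ x) ^ 2
        + ρ x * deriv φ (ρ x) * deriv (deriv ρ) x := by
    intro x
    rw [E2]
    have h2 : HasDerivAt (fun z => ρ z * deriv φ (ρ z) * deriv ρ z)
        (deriv φ (ρ x) * (deriv ρ x) ^ 2
          + ρ x * deriv (deriv φ) (ρ x) * (deriv ρ x) ^ 2
          + ρ x * deriv φ (ρ x) * deriv (deriv ρ) x) x := by
      have h := ((Hρ x).mul (HA x)).mul (Hρ1 x)
      refine h.congr_deriv ?_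
      simp only [Pi.mul_apply]
      ring
    exact h2.deriv
  have Hk1 : ∀ x : ℝ, deriv (fun z => κ (ρ z) * deriv ρ z) x
      = (deriv φ (ρ x)) ^ 2 * (deriv ρ x) ^ 2
        + 2 * ρ x * deriv φ (ρ x) * deriv (deriv φ) (ρ x) * (deriv ρ x) ^ 2
        + ρ x * (deriv φ (ρ x)) ^ 2 * deriv (deriv ρ) x := by
    intro x
    rw [E3]
    have h2 : HasDerivAt (fun z => ρ z * (deriv φ (ρ z)) ^ 2 * deriv ρ z)
        ((deriv φ (ρ x)) ^ 2 * (deriv ρ x) ^ 2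
          + 2 * ρ x * deriv φ (ρ x) * deriv (deriv φ) (ρ x) * (deriv ρ x) ^ 2
          + ρ x * (deriv φ (ρ x)) ^ 2 * deriv (deriv ρ) x) x := by
      have h := ((Hρ x).mul ((HA x).pow 2)).mul (Hρ1 x)
      refine h.congr_deriv ?_
      simp only [Pi.mul_apply, Pi.pow_apply]
      push_cast
      ring
    exact h2.deriv
  have Hκ' : ∀ x : ℝ, deriv κ (ρ x)
      = (deriv φ (ρ x)) ^ 2 + 2 * ρ x * deriv φ (ρ x) * deriv (deriv φ) (ρ x) := by
    intro x
    have hev : κ =ᶠ[nhds (ρ x)] fun s => s * (deriv φ s) ^ 2 := by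
      filter_upwards [isOpen_Ioi.mem_nhds (hpos x)] with s hs
      rw [hκ _ hs, hμ' _ hs]
      field_simp [(Set.mem_Ioi.mp hs).ne']
    rw [hev.deriv_eq]
    have h2 : HasDerivAt (fun s => s * (deriv φ s) ^ 2)
        ((deriv φ (ρ x)) ^ 2 + 2 * ρ x * deriv φ (ρ x) * deriv (deriv φ) (ρ x)) (ρ x) := by
      have h := (hasDerivAt_id (ρ x)).mul ((Hφ' x).pow 2)
      refine h.congr_deriv ?_
      simp only [id_eq, Pi.pow_apply]
      push_cast
      ring
    exact h2.deriv
  -- continuity of the building blocks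
  have ca : Continuous (fun x => deriv φ (ρ x)) :=
    (hφ1.continuousOn).comp_continuous hρ'.continuous fun x => hpos x
  have cb : Continuous (fun x => deriv (deriv φ) (ρ x)) :=
    (hφ2.continuousOn).comp_continuous hρ'.continuous fun x => hpos x
  have cρ : Continuous ρ := hρ'.continuous
  have cρ1 : Continuous (deriv ρ) := hρ1.continuous
  -- the total-derivative function G and its derivative g'
  set g' : ℝ → ℝ := fun x =>
    (deriv φ (ρ x)) ^ 3 * (deriv ρ x) ^ 4 / 2
      + 3 / 2 * ρ x * (deriv φ (ρ x)) ^ 2 * deriv (deriv φ) (ρ x) * (deriv ρ x) ^ 4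
      + 3 / 2 * ρ x * (deriv φ (ρ x)) ^ 3 * (deriv ρ x) ^ 2 * deriv (deriv ρ) x with hg'
  have HG : ∀ x : ℝ, HasDerivAt
      (fun z => ρ z * (deriv φ (ρ z) * deriv ρ z) ^ 3 / 2) (g' x) x := by
    intro x
    have h := ((Hρ x).mul (((HA x).mul (Hρ1 x)).pow 3)).div_const 2
    refine h.congr_deriv ?_
    rw [hg']
    simp only [Pi.mul_apply, Pi.pow_apply]
    push_cast
    ring
  have cg' : Continuous g' := by
    rw [hg']
    fun_prop
  -- explicit continuous form of the right-hand integrand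
  set FR : ℝ → ℝ := fun x =>
    ρ x * (ρ x * deriv φ (ρ x))
      * (deriv (deriv φ) (ρ x) * (deriv ρ x) ^ 2 + deriv φ (ρ x) * deriv (deriv ρ) x) ^ 2
      with hFR
  have hRe : ∀ x : ℝ, ρ x * deriv μ (ρ x) * (deriv (deriv (fun z => φ (ρ z))) x) ^ 2 = FR x := by
    intro x
    rw [hμ' _ (hpos x), Hf2 x, hFR]
  have cFR : Continuous FR := by
    rw [hFR]
    fun_prop
  -- the pointwise key identity
  have key : ∀ x : ℝ,
      (deriv (fun z => κ (ρ z) * deriv ρ z) x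
          - deriv κ (ρ x) / 2 * (deriv ρ x) ^ 2)
        * deriv (deriv (fun z => μ (ρ z))) x = FR x + g' x := by
    intro x
    rw [Hk1 x, Hκ' x, Hm2 x, hFR, hg']
    ring
  -- integrability
  have intFR : IntervalIntegrable FR MeasureTheory.volume 0 1 := cFR.intervalIntegrable 0 1
  have intg : IntervalIntegrable g' MeasureTheory.volume 0 1 := cg'.intervalIntegrable 0 1
  -- periodicity kills the total derivative
  have hρ10 : ρ 1 = ρ 0 := by simpa using hper 0
  have hρ'10 : deriv ρ 1 = deriv ρ 0 := by
    have h : (fun y => ρ (y + 1)) = ρ := funext fun y => hper y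
    calc deriv ρ 1 = deriv ρ (0 + 1) := by norm_num
      _ = deriv (fun y => ρ (y + 1)) 0 := (deriv_comp_add_const ρ 1 0).symm
      _ = deriv ρ 0 := by rw [h]
  have hGint : ∫ x in (0:ℝ)..1, g' x = 0 := by
    rw [intervalIntegral.integral_eq_sub_of_hasDerivAt
      (fun x _ => HG x) intg]
    rw [hρ10, hρ'10]
    ring
  calc ∫ x in (0:ℝ)..1,
        (deriv (fun z => κ (ρ z) * deriv ρ z) x
            - deriv κ (ρ x) / 2 * (deriv ρ x) ^ 2)
          * deriv (deriv (fun z => μ (ρ z))) x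
      = ∫ x in (0:ℝ)..1, (FR x + g' x) := by
        apply intervalIntegral.integral_congr
        intro x _
        exact key x
    _ = (∫ x in (0:ℝ)..1, FR x) + ∫ x in (0:ℝ)..1, g' x :=
        intervalIntegral.integral_add intFR intg
    _ = ∫ x in (0:ℝ)..1, FR x := by rw [hGint, add_zero]
    _ = ∫ x in (0:ℝ)..1,
          ρ x * deriv μ (ρ x) * (deriv (deriv (fun z => φ (ρ z))) x) ^ 2 := by
        apply intervalIntegral.integral_congr
        intro x _
        exact (hRe x).symm
end

section
/- Let ρ : 𝕋 → (0,∞) be smooth and positive, and let φ, μ be smooth on (0,∞) with μ'(s) = s φ'(s) > 0 and |s μ''(s)| ≤ C μ'(s) for all s > 0 and some constant C. Then there exists a constant C̃ > 0, depending only on C, such that ∫_𝕋 ρ² (φ'(ρ))³ ( |∂ₓ²ρ|² + |∂ₓρ|⁴/ρ² ) dx ≤ C̃ ∫_𝕋 ρ μ'(ρ) |∂ₓ²(φ(ρ))|² dx. -/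
open scoped ContDiff

lemma stmt2_aux (K : ℝ) (hK : 0 < K) (r r1 r2 p1 p2 : ℝ → ℝ)
    (hr : Continuous r) (hr1 : Continuous r1) (hr2 : Continuous r2)
    (hp1 : Continuous p1) (hp2 : Continuous p2)
    (hrpos : ∀ x, 0 < r x)
    (hp1pos : ∀ x, 0 < p1 x)
    (hw : ∀ x, r x * |p2 x| ≤ K * p1 x)
    (hdr : ∀ x, HasDerivAt r (r1 x) x)
    (hdr1 : ∀ x, HasDerivAt r1 (r2 x) x)
    (hdp1 : ∀ x, HasDerivAt p1 (p2 x * r1 x) x)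
    (hper : r 1 = r 0) (hper1 : r1 1 = r1 0) (hp1per : p1 1 = p1 0) :
    ∫ x in (0:ℝ)..1, (r x)^2 * (p1 x)^3 * ((r2 x)^2 + (r1 x)^4 / (r x)^2)
      ≤ (11 + 18*K^2) * ∫ x in (0:ℝ)..1,
          (r x)^2 * p1 x * (p2 x * (r1 x)^2 + p1 x * r2 x)^2 := by
  set Y : ℝ → ℝ := fun x => p2 x * (r1 x)^2 + p1 x * r2 x with hYdef
  have hcY : Continuous Y := (hp2.mul (hr1.pow 2)).add (hp1.mul hr2)
  set A : ℝ → ℝ := fun x => (p1 x)^3 * (r x)^2 * (r2 x)^2 with hA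
  set B : ℝ → ℝ := fun x => (p1 x)^3 * (r1 x)^4 with hB
  set S : ℝ → ℝ := fun x => (r x)^2 * p1 x * (Y x)^2 with hS
  set X : ℝ → ℝ := fun x => (p1 x)^2 * r x * (r1 x)^2 * Y x with hX
  have hcA : Continuous A := ((hp1.pow 3).mul (hr.pow 2)).mul (hr2.pow 2)
  have hcB : Continuous B := (hp1.pow 3).mul (hr1.pow 4)
  have hcS : Continuous S := ((hr.pow 2).mul hp1).mul (hcY.pow 2)
  have hcX : Continuous X := (((hp1.pow 2).mul hr).mul (hr1.pow 2)).mul hcY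
  have hiA : IntervalIntegrable A MeasureTheory.volume 0 1 := hcA.intervalIntegrable 0 1
  have hiB : IntervalIntegrable B MeasureTheory.volume 0 1 := hcB.intervalIntegrable 0 1
  have hiS : IntervalIntegrable S MeasureTheory.volume 0 1 := hcS.intervalIntegrable 0 1
  have hiX : IntervalIntegrable X MeasureTheory.volume 0 1 := hcX.intervalIntegrable 0 1
  -- integration by parts identity
  have hdG : ∀ x, HasDerivAt (fun x => (p1 x)^3 * r x * (r1 x)^3) (3 * X x + B x) x := by
    intro x
    have h1 : HasDerivAt (fun x => (p1 x)^3 * r x * (r1 x)^3) _ x := (((hdp1 x).pow 3).mul (hdr x)).mul ((hdr1 x).pow 3)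
    convert h1 using 1
    simp only [hX, hB, hYdef, Pi.pow_apply, Pi.mul_apply]
    push_cast
    ring
  have hIBP : ∫ x in (0:ℝ)..1, (3 * X x + B x) = 0 := by
    rw [intervalIntegral.integral_eq_sub_of_hasDerivAt (fun x _ => hdG x)
        (((hiX.const_mul 3).add hiB))]
    rw [hper, hper1, hp1per]
    ring
  have hXB : 3 * (∫ x in (0:ℝ)..1, X x) + (∫ x in (0:ℝ)..1, B x) = 0 := by
    rw [← intervalIntegral.integral_const_mul,
      ← intervalIntegral.integral_add (hiX.const_mul 3) hiB]
    exact hIBP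
  -- nonnegativity of S integral
  have hSnn : 0 ≤ ∫ x in (0:ℝ)..1, S x := by
    apply intervalIntegral.integral_nonneg (by norm_num)
    intro x _
    simp only [hS]
    exact mul_nonneg (mul_nonneg (sq_nonneg _) (hp1pos x).le) (sq_nonneg _)
  -- pointwise AM-GM for the cross term
  have hpt1 : ∀ x, -(3 * X x) ≤ (1/2) * B x + (9/2) * S x := by
    intro x
    simp only [hX, hB, hS, hYdef]
    nlinarith [mul_nonneg (hp1pos x).le
      (sq_nonneg (p1 x * (r1 x)^2 + 3 * r x * (p2 x * (r1 x)^2 + p1 x * r2 x)))]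
  have hXle : ∫ x in (0:ℝ)..1, (-(3 * X x)) ≤ ∫ x in (0:ℝ)..1, ((1/2) * B x + (9/2) * S x) :=
    intervalIntegral.integral_mono_on (by norm_num) ((hiX.const_mul 3).neg)
      ((hiB.const_mul _).add (hiS.const_mul _)) (fun x _ => hpt1 x)
  have e1 : ∫ x in (0:ℝ)..1, (-(3 * X x)) = -(3 * ∫ x in (0:ℝ)..1, X x) := by
    rw [intervalIntegral.integral_neg, intervalIntegral.integral_const_mul]
  have e2 : ∫ x in (0:ℝ)..1, ((1/2) * B x + (9/2) * S x)
      = (1/2) * (∫ x in (0:ℝ)..1, B x) + (9/2) * (∫ x in (0:ℝ)..1, S x) := by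
    rw [intervalIntegral.integral_add (hiB.const_mul _) (hiS.const_mul _),
      intervalIntegral.integral_const_mul, intervalIntegral.integral_const_mul]
  have hB9S : (∫ x in (0:ℝ)..1, B x) ≤ 9 * ∫ x in (0:ℝ)..1, S x := by
    rw [e1, e2] at hXle
    linarith
  -- pointwise estimate for A
  have hpt2 : ∀ x, A x ≤ 2 * S x + 2 * K^2 * B x := by
    intro x
    simp only [hA, hS, hB, hYdef]
    have h1 : (r x * |p2 x|)^2 ≤ (K * p1 x)^2 :=
      pow_le_pow_left₀ (mul_nonneg (hrpos x).le (abs_nonneg _)) (hw x) 2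
    have h2 : (r x)^2 * (p2 x)^2 ≤ K^2 * (p1 x)^2 := by
      rw [mul_pow, mul_pow, sq_abs] at h1
      exact h1
    have H1 : 0 ≤ (p1 x * (r x)^2) *
        (p1 x * r2 x + 2 * (p2 x * (r1 x)^2))^2 :=
      mul_nonneg (mul_nonneg (hp1pos x).le (sq_nonneg _)) (sq_nonneg _)
    have H2 : (p1 x * ((r1 x)^2)^2) * ((r x)^2 * (p2 x)^2)
        ≤ (p1 x * ((r1 x)^2)^2) * (K^2 * (p1 x)^2) :=
      mul_le_mul_of_nonneg_left h2 (mul_nonneg (hp1pos x).le (sq_nonneg _))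
    nlinarith [H1, H2]
  have hAle : ∫ x in (0:ℝ)..1, A x ≤ ∫ x in (0:ℝ)..1, (2 * S x + 2*K^2 * B x) :=
    intervalIntegral.integral_mono_on (by norm_num) hiA
      ((hiS.const_mul _).add (hiB.const_mul _)) (fun x _ => hpt2 x)
  have e3 : ∫ x in (0:ℝ)..1, (2 * S x + 2*K^2 * B x)
      = 2 * (∫ x in (0:ℝ)..1, S x) + 2*K^2 * (∫ x in (0:ℝ)..1, B x) := by
    rw [intervalIntegral.integral_add (hiS.const_mul _) (hiB.const_mul _),
      intervalIntegral.integral_const_mul, intervalIntegral.integral_const_mul]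
  -- rewrite the two sides
  have hLB : ∀ x, (r x)^2 * (p1 x)^3 * ((r2 x)^2 + (r1 x)^4 / (r x)^2) = A x + B x := by
    intro x
    have hrne : (r x) ≠ 0 := (hrpos x).ne'
    simp only [hA, hB]
    field_simp
  have hRS : ∀ x, (r x)^2 * p1 x * (p2 x * (r1 x)^2 + p1 x * r2 x)^2 = S x := by
    intro x
    simp only [hS, hYdef]
  calc ∫ x in (0:ℝ)..1, (r x)^2 * (p1 x)^3 * ((r2 x)^2 + (r1 x)^4 / (r x)^2)
      = ∫ x in (0:ℝ)..1, (A x + B x) :=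
        intervalIntegral.integral_congr (fun x _ => hLB x)
    _ = (∫ x in (0:ℝ)..1, A x) + (∫ x in (0:ℝ)..1, B x) :=
        intervalIntegral.integral_add hiA hiB
    _ ≤ (11 + 18*K^2) * ∫ x in (0:ℝ)..1, S x := by
        rw [e3] at hAle
        nlinarith [hB9S, hSnn, hAle, sq_nonneg K]
    _ = (11 + 18*K^2) * ∫ x in (0:ℝ)..1,
          (r x)^2 * p1 x * (p2 x * (r1 x)^2 + p1 x * r2 x)^2 := by
        rw [intervalIntegral.integral_congr (fun x _ => hRS x)]


/-- Lemma 3.2 of the paper: under the assumption `s|μ''(s)| ≤ C μ'(s)` there is a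
constant `C̃`, depending only on `C`, such that
`∫ ρ²(φ'(ρ))³(|∂ₓ²ρ|² + |∂ₓρ|⁴/ρ²) ≤ C̃ ∫ ρ μ'(ρ)|∂ₓ²(φ(ρ))|²`. -/
theorem stmt2 (C : ℝ) (hC : 0 < C) :
    ∃ Ct > 0, ∀ ρ φ μ : ℝ → ℝ,
      ContDiff ℝ (⊤ : ℕ∞) ρ → (∀ x, 0 < ρ x) → Function.Periodic ρ 1 →
      ContDiffOn ℝ (⊤ : ℕ∞) φ (Set.Ioi 0) → ContDiffOn ℝ (⊤ : ℕ∞) μ (Set.Ioi 0) →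
      (∀ s > (0:ℝ), deriv μ s = s * deriv φ s) →
      (∀ s > (0:ℝ), 0 < deriv μ s) →
      (∀ s > (0:ℝ), s * |deriv (deriv μ) s| ≤ C * deriv μ s) →
      ∫ x in (0:ℝ)..1,
          (ρ x) ^ 2 * (deriv φ (ρ x)) ^ 3 *
            ((deriv (deriv ρ) x) ^ 2 + (deriv ρ x) ^ 4 / (ρ x) ^ 2)
        ≤ Ct * ∫ x in (0:ℝ)..1,
            ρ x * deriv μ (ρ x) * (deriv (deriv (fun z => φ (ρ z))) x) ^ 2 := by
  refine ⟨11 + 18 * (C + 1) ^ 2, by positivity, ?_⟩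
  intro ρ φ μ hρ hρpos hper hφ hμ hμφ hμpos hμ''
  have h1top : (1 : WithTop ℕ∞) ≤ ∞ := by exact_mod_cast le_top
  have hρS : ContDiff ℝ ∞ ρ := hρ.of_le (by simp)
  have hφS : ContDiffOn ℝ ∞ φ (Set.Ioi 0) := hφ.of_le (by simp)
  have hρ1 : ContDiff ℝ ∞ (deriv ρ) := (contDiff_infty_iff_deriv.mp hρS).2
  have hcρ : Continuous ρ := hρS.continuous
  have hcρ1 : Continuous (deriv ρ) := hρ1.continuous
  have hcρ2 : Continuous (deriv (deriv ρ)) := (contDiff_infty_iff_deriv.mp hρ1).2.continuous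
  have hdρ : ∀ x : ℝ, HasDerivAt ρ (deriv ρ x) x := fun x =>
    (hρS.differentiable (by simp) x).hasDerivAt
  have hdρ1 : ∀ x : ℝ, HasDerivAt (deriv ρ) (deriv (deriv ρ) x) x := fun x =>
    (hρ1.differentiable (by simp) x).hasDerivAt
  have hF1 : ContDiffOn ℝ ∞ (deriv φ) (Set.Ioi 0) := hφS.deriv_of_isOpen isOpen_Ioi le_rfl
  have hF2 : ContDiffOn ℝ ∞ (deriv (deriv φ)) (Set.Ioi 0) :=
    hF1.deriv_of_isOpen isOpen_Ioi le_rfl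
  have hmem : ∀ s : ℝ, 0 < s → Set.Ioi (0:ℝ) ∈ nhds s := fun s hs => isOpen_Ioi.mem_nhds hs
  have hdφ : ∀ s : ℝ, 0 < s → HasDerivAt φ (deriv φ s) s := fun s hs =>
    ((hφS.contDiffAt (hmem s hs)).differentiableAt (by simp)).hasDerivAt
  have hdF1 : ∀ s : ℝ, 0 < s → HasDerivAt (deriv φ) (deriv (deriv φ) s) s := fun s hs =>
    ((hF1.contDiffAt (hmem s hs)).differentiableAt (by simp)).hasDerivAt
  have hF1pos : ∀ s : ℝ, 0 < s → 0 < deriv φ s := by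
    intro s hs
    have h := hμpos s hs
    rw [hμφ s hs] at h
    rcases mul_pos_iff.mp h with ⟨_, h2⟩ | ⟨h1, _⟩
    · exact h2
    · linarith
  -- second derivative of μ
  have hμ2 : ∀ s : ℝ, 0 < s →
      deriv (deriv μ) s = deriv φ s + s * deriv (deriv φ) s := by
    intro s hs
    have hev : deriv μ =ᶠ[nhds s] fun t => t * deriv φ t :=
      Filter.eventuallyEq_of_mem (hmem s hs) fun t ht => hμφ t ht
    have hd : HasDerivAt (fun t => t * deriv φ t)
        (1 * deriv φ s + s * deriv (deriv φ) s) s :=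
      (hasDerivAt_id' (x := s)).mul (hdF1 s hs)
    rw [hev.deriv_eq, hd.deriv]
    ring
  -- the key pointwise bound on deriv (deriv φ)
  have hW : ∀ s : ℝ, 0 < s → s * |deriv (deriv φ) s| ≤ (C + 1) * deriv φ s := by
    intro s hs
    have ha : 0 < deriv φ s := hF1pos s hs
    have h := hμ'' s hs
    rw [hμ2 s hs, hμφ s hs] at h
    have ht : |deriv φ s + s * deriv (deriv φ) s| ≤ C * deriv φ s := by
      have hh : s * |deriv φ s + s * deriv (deriv φ) s| ≤ s * (C * deriv φ s) := by
        linarith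
      exact le_of_mul_le_mul_left hh hs
    have habs : |s * deriv (deriv φ) s|
        ≤ |deriv φ s + s * deriv (deriv φ) s| + deriv φ s := by
      have h3 := abs_add_le (deriv φ s + s * deriv (deriv φ) s) (-(deriv φ s))
      rw [abs_neg, abs_of_pos ha] at h3
      have h4 : deriv φ s + s * deriv (deriv φ) s + -deriv φ s
          = s * deriv (deriv φ) s := by ring
      rw [h4] at h3
      exact h3
    have hsm : s * |deriv (deriv φ) s| = |s * deriv (deriv φ) s| := by
      rw [abs_mul, abs_of_pos hs]
    linarith
  -- chain rule for φ ∘ ρ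
  have hdg : ∀ x : ℝ, HasDerivAt (fun z => φ (ρ z)) (deriv φ (ρ x) * deriv ρ x) x :=
    fun x => (hdφ (ρ x) (hρpos x)).comp x (hdρ x)
  have hg1 : deriv (fun z => φ (ρ z)) = fun x => deriv φ (ρ x) * deriv ρ x :=
    funext fun x => (hdg x).deriv
  have hdF1ρ : ∀ x : ℝ,
      HasDerivAt (fun z => deriv φ (ρ z)) (deriv (deriv φ) (ρ x) * deriv ρ x) x :=
    fun x => (hdF1 (ρ x) (hρpos x)).comp x (hdρ x)
  have hY : ∀ x : ℝ, deriv (deriv (fun z => φ (ρ z))) x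
      = deriv (deriv φ) (ρ x) * (deriv ρ x) ^ 2 + deriv φ (ρ x) * deriv (deriv ρ) x := by
    intro x
    rw [hg1]
    have h2 : HasDerivAt (fun x => deriv φ (ρ x) * deriv ρ x)
        (deriv (deriv φ) (ρ x) * deriv ρ x * deriv ρ x
          + deriv φ (ρ x) * deriv (deriv ρ) x) x :=
      (hdF1ρ x).mul (hdρ1 x)
    rw [h2.deriv]
    ring
  -- rewrite the right-hand side integrand
  have hR : ∀ x : ℝ, ρ x * deriv μ (ρ x) * (deriv (deriv (fun z => φ (ρ z))) x) ^ 2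
      = (ρ x)^2 * (deriv φ (ρ x)) *
        ((deriv (deriv φ) (ρ x)) * (deriv ρ x)^2 + deriv φ (ρ x) * deriv (deriv ρ) x)^2 := by
    intro x
    rw [hμφ (ρ x) (hρpos x), hY x]
    ring
  rw [intervalIntegral.integral_congr (g := fun x => (ρ x)^2 * (deriv φ (ρ x)) *
        ((deriv (deriv φ) (ρ x)) * (deriv ρ x)^2 + deriv φ (ρ x) * deriv (deriv ρ) x)^2)
      (fun x _ => hR x)]
  -- periodicity facts
  have hperρ : ρ 1 = ρ 0 := by simpa using hper 0
  have hperρ1 : deriv ρ 1 = deriv ρ 0 := by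
    have hρeq : ρ = fun x => ρ (x + 1) := funext fun x => (hper x).symm
    conv_rhs => rw [hρeq]
    rw [deriv_comp_add_const]
    norm_num
  exact stmt2_aux (C + 1) (by positivity) ρ (deriv ρ) (deriv (deriv ρ))
    (fun x => deriv φ (ρ x)) (fun x => deriv (deriv φ) (ρ x))
    hcρ hcρ1 hcρ2
    ((hF1.continuousOn).comp_continuous hcρ fun x => hρpos x)
    ((hF2.continuousOn).comp_continuous hcρ fun x => hρpos x)
    hρpos (fun x => hF1pos (ρ x) (hρpos x)) (fun x => hW (ρ x) (hρpos x))
    hdρ hdρ1 hdF1ρ hperρ hperρ1 (show deriv φ (ρ 1) = deriv φ (ρ 0) by rw [hperρ])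
end

section
/- For every smooth positive function ρ : 𝕋 → (0,∞) on the one-dimensional torus and every real θ ≠ 0, one has the integration by parts identity ∫_𝕋 ∂ₓ²(ρ^θ) |∂ₓ(ρ^{θ/2})|² dx = (4/3) ∫_𝕋 |∂ₓ(ρ^{θ/2})|⁴ dx. -/
/-- Integration by parts identity:
`∫ ∂ₓ²(ρ^θ)|∂ₓ(ρ^{θ/2})|² = (4/3)∫ |∂ₓ(ρ^{θ/2})|⁴` on the torus. -/
theorem stmt3 (ρ : ℝ → ℝ) (θ : ℝ) (hθ : θ ≠ 0)
    (hρ : ContDiff ℝ (⊤ : ℕ∞) ρ) (hpos : ∀ x, 0 < ρ x) (hper : Function.Periodic ρ 1) :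
    ∫ x in (0:ℝ)..1,
        deriv (deriv (fun y => ρ y ^ θ)) x * (deriv (fun y => ρ y ^ (θ / 2)) x) ^ 2
      = (4 / 3) * ∫ x in (0:ℝ)..1, (deriv (fun y => ρ y ^ (θ / 2)) x) ^ 4 := by
  set g : ℝ → ℝ := fun y => ρ y ^ (θ / 2) with hg_def
  have hρ' : ContDiff ℝ (⊤:ℕ∞) ρ := hρ.of_le (by simp)
  have hg : ContDiff ℝ (⊤:ℕ∞) g := by
    rw [contDiff_iff_contDiffAt]
    intro x
    exact hρ'.contDiffAt.rpow_const_of_ne (hpos x).ne'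
  have hgd : Differentiable ℝ g := hg.differentiable (by simp)
  have hG : ContDiff ℝ (⊤:ℕ∞) (deriv g) := (contDiff_infty_iff_deriv.mp hg).2
  set G : ℝ → ℝ := deriv g with hG_def
  have hGd : Differentiable ℝ G := hG.differentiable (by simp)
  set G' : ℝ → ℝ := deriv G with hG'_def
  have hGc : Continuous G := hG.continuous
  have hG'c : Continuous G' := (contDiff_infty_iff_deriv.mp hG).2.continuous
  have hgc : Continuous g := hg.continuous
  -- ρ^θ = g^2
  have hsq : (fun y => ρ y ^ θ) = fun y => g y ^ 2 := by
    funext y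
    simp only [hg_def]
    rw [← Real.rpow_natCast (ρ y ^ (θ/2)) 2, ← Real.rpow_mul (hpos y).le]
    norm_num
  have hderiv1 : deriv (fun y => g y ^ 2) = fun x => 2 * g x * G x := by
    funext x
    have h := ((hgd x).hasDerivAt.pow 2).deriv
    simp at h
    exact h
  have hderiv2 : ∀ x, deriv (deriv (fun y => ρ y ^ θ)) x = 2 * (G x ^ 2 + g x * G' x) := by
    intro x
    rw [hsq, hderiv1]
    have h1 : HasDerivAt (fun x => 2 * g x * G x) (2 * G x * G x + 2 * g x * G' x) x := by
      have := ((hgd x).hasDerivAt.const_mul (2:ℝ)).mul (hGd x).hasDerivAt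
      rw [← hG_def, ← hG'_def] at this
      exact this
    rw [h1.deriv]; ring
  -- periodicity
  have hgper : Function.Periodic g 1 := by
    intro x; simp only [hg_def]; rw [hper x]
  have hGper : Function.Periodic G 1 := by
    intro x
    have h1 : HasDerivAt (fun y => g (y + 1)) (G (x + 1) * 1) x :=
      by
        have := (hgd (x + 1)).hasDerivAt.comp x ((hasDerivAt_id' (x := x)).add_const 1)
        exact this
    have h2 : (fun y => g (y + 1)) = g := funext fun y => hgper y
    rw [h2, mul_one] at h1
    rw [hG_def]
    exact (h1.deriv).symm ▸ rfl
  -- integral of total derivative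
  have hFder : ∀ x, HasDerivAt (fun y => g y * G y ^ 3)
      (G x ^ 4 + 3 * g x * G x ^ 2 * G' x) x := by
    intro x
    have h := (hgd x).hasDerivAt.mul ((hGd x).hasDerivAt.pow 3)
    rw [← hG_def, ← hG'_def] at h
    exact h.congr_deriv (by simp only [Pi.pow_apply]; norm_num; ring)
  have hint2 : ∫ x in (0:ℝ)..1, (G x ^ 4 + 3 * g x * G x ^ 2 * G' x)
      = g 1 * G 1 ^ 3 - g 0 * G 0 ^ 3 := by
    apply intervalIntegral.integral_eq_sub_of_hasDerivAt (fun x _ => hFder x)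
    exact (by fun_prop : Continuous fun x => G x ^ 4 + 3 * g x * G x ^ 2 * G' x).intervalIntegrable 0 1
  have hzero : g 1 * G 1 ^ 3 - g 0 * G 0 ^ 3 = 0 := by
    have h1 : g 1 = g 0 := by simpa using hgper 0
    have h2 : G 1 = G 0 := by simpa using hGper 0
    rw [h1, h2]; ring
  have hint1 : ∫ x in (0:ℝ)..1, deriv (deriv (fun y => ρ y ^ θ)) x * G x ^ 2
      = ∫ x in (0:ℝ)..1, ((4/3) * G x ^ 4
          + (2/3) * (G x ^ 4 + 3 * g x * G x ^ 2 * G' x)) := by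
    apply intervalIntegral.integral_congr
    intro x _
    simp only [hderiv2 x]; ring
  have hi1 : IntervalIntegrable (fun x => (4/3) * G x ^ 4) MeasureTheory.volume 0 1 :=
    (by fun_prop : Continuous fun x => (4/3 : ℝ) * G x ^ 4).intervalIntegrable 0 1
  have hi2 : IntervalIntegrable (fun x => (2/3) * (G x ^ 4 + 3 * g x * G x ^ 2 * G' x))
      MeasureTheory.volume 0 1 :=
    (by fun_prop : Continuous fun x => (2/3 : ℝ) * (G x ^ 4 + 3 * g x * G x ^ 2 * G' x)).intervalIntegrable 0 1
  rw [hint1, intervalIntegral.integral_add hi1 hi2,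
    intervalIntegral.integral_const_mul, intervalIntegral.integral_const_mul,
    hint2, hzero]
  ring
end

section
/- (Bernis–Friedman type inequality) For every smooth positive function ρ : 𝕋 → (0,∞) on the one-dimensional torus and every real θ ≠ 0, (16/9) ∫_𝕋 |∂ₓ(ρ^{θ/2})|⁴ dx ≤ ∫_𝕋 |∂ₓ²(ρ^θ)|² dx. -/
/-- Bernis–Friedman type inequality:
`(16/9)∫ |∂ₓ(ρ^{θ/2})|⁴ ≤ ∫ |∂ₓ²(ρ^θ)|²` on the torus. -/
theorem stmt4 (ρ : ℝ → ℝ) (θ : ℝ) (hθ : θ ≠ 0)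
    (hρ : ContDiff ℝ (⊤ : ℕ∞) ρ) (hpos : ∀ x, 0 < ρ x) (hper : Function.Periodic ρ 1) :
    (16 / 9) * ∫ x in (0:ℝ)..1, (deriv (fun y => ρ y ^ (θ / 2)) x) ^ 4
      ≤ ∫ x in (0:ℝ)..1, (deriv (deriv (fun y => ρ y ^ θ)) x) ^ 2 := by
  set v : ℝ → ℝ := fun y => ρ y ^ (θ / 2) with hvdef
  -- smoothness of v
  have hv : ContDiff ℝ (⊤ : ℕ∞) v := by
    rw [contDiff_iff_contDiffAt]
    intro x
    exact (Real.contDiffAt_rpow_const_of_ne (ne_of_gt (hpos x))).comp x hρ.contDiffAt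
  set u : ℝ → ℝ := deriv v with hudef
  have hv8 : ContDiff ℝ (⊤ : ℕ∞) v := hv.of_le (by simp)
  have hu : ContDiff ℝ (⊤ : ℕ∞) u := (contDiff_infty_iff_deriv.mp hv8).2
  have hvd : Differentiable ℝ v := hv.differentiable (by simp)
  have hud : Differentiable ℝ u := hu.differentiable (by simp)
  have hu' : Continuous (deriv u) := ((contDiff_infty_iff_deriv.mp hu).2).continuous
  -- ρ^θ = v * v
  have hg : (fun y => ρ y ^ θ) = fun y => v y * v y := by
    funext y
    rw [hvdef]
    rw [← Real.rpow_add (hpos y)]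
    ring_nf
  -- first derivative
  have hgd : deriv (fun y => ρ y ^ θ) = fun x => 2 * (v x * u x) := by
    funext x
    rw [hg, deriv_fun_mul (hvd x) (hvd x)]
    ring
  -- second derivative
  have hgdd : ∀ x, deriv (deriv (fun y => ρ y ^ θ)) x
      = 2 * (u x * u x + v x * deriv u x) := by
    intro x
    rw [hgd]
    rw [deriv_const_mul 2 ((hvd x).fun_mul (hud x)), deriv_fun_mul (hvd x) (hud x)]
  -- periodicity of v and u
  have hvper : Function.Periodic v 1 := fun x => by simp [hvdef, hper x]
  have huper : Function.Periodic u 1 := by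
    intro x
    have : v = fun y => v (y + 1) := by funext y; rw [hvper y]
    calc u (x + 1) = deriv v (x + 1) := rfl
      _ = deriv (fun y => v (y + 1)) x := (deriv_comp_add_const v 1 x).symm
      _ = deriv v x := by rw [← this]
  -- the flux term F = v * u^3
  set F : ℝ → ℝ := fun x => v x * u x ^ 3 with hFdef
  have hFd : ∀ x, HasDerivAt F (u x * u x ^ 3 + v x * (3 * u x ^ 2 * deriv u x)) x := by
    intro x
    have h1 : HasDerivAt v (u x) x := (hvd x).hasDerivAt
    have h2 : HasDerivAt (fun y => u y ^ 3) (3 * u x ^ 2 * deriv u x) x := by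
      simpa using ((hud x).hasDerivAt.fun_pow 3)
    exact h1.mul h2
  have hFderiv : deriv F = fun x => u x ^ 4 + 3 * (v x * u x ^ 2 * deriv u x) := by
    funext x
    rw [(hFd x).deriv]; ring
  -- continuity facts
  have hcv : Continuous v := hv.continuous
  have hcu : Continuous u := hu.continuous
  have hint1 : IntervalIntegrable (fun x => u x ^ 4) MeasureTheory.volume 0 1 :=
    (hcu.pow 4).intervalIntegrable 0 1
  have hq : Continuous (fun x => (2 * (v x * deriv u x) + (2/3) * u x ^ 2) ^ 2) := by
    fun_prop
  have hintq : IntervalIntegrable (fun x => (2 * (v x * deriv u x) + (2/3) * u x ^ 2) ^ 2)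
      MeasureTheory.volume 0 1 := hq.intervalIntegrable 0 1
  have hintF : IntervalIntegrable (deriv F) MeasureTheory.volume 0 1 := by
    rw [hFderiv]
    exact (by fun_prop : Continuous fun x => u x ^ 4 + 3 * (v x * u x ^ 2 * deriv u x)).intervalIntegrable 0 1
  -- FTC: ∫ deriv F = 0
  have hFzero : (∫ x in (0:ℝ)..1, deriv F x) = 0 := by
    rw [intervalIntegral.integral_deriv_eq_sub (fun x _ => (hFd x).differentiableAt) hintF]
    have : F 1 = F 0 := by
      simp only [hFdef]
      rw [show (1:ℝ) = 0 + 1 by ring, hvper 0, huper 0]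
    rw [this, sub_self]
  -- pointwise identity
  have hpt : ∀ x, (deriv (deriv (fun y => ρ y ^ θ)) x) ^ 2
      = (16/9) * u x ^ 4 + (2 * (v x * deriv u x) + (2/3) * u x ^ 2) ^ 2
        + (16/9) * deriv F x := by
    intro x
    rw [hgdd x, hFderiv]
    ring
  -- assemble
  have hsplit : (∫ x in (0:ℝ)..1, (deriv (deriv (fun y => ρ y ^ θ)) x) ^ 2)
      = (16/9) * (∫ x in (0:ℝ)..1, u x ^ 4)
        + (∫ x in (0:ℝ)..1, (2 * (v x * deriv u x) + (2/3) * u x ^ 2) ^ 2)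
        + (16/9) * (∫ x in (0:ℝ)..1, deriv F x) := by
    rw [← intervalIntegral.integral_const_mul, ← intervalIntegral.integral_const_mul,
      ← intervalIntegral.integral_add (hint1.const_mul _) hintq,
      ← intervalIntegral.integral_add ((hint1.const_mul _).add hintq) (hintF.const_mul _)]
    exact intervalIntegral.integral_congr fun x _ => hpt x
  have hqnn : 0 ≤ ∫ x in (0:ℝ)..1, (2 * (v x * deriv u x) + (2/3) * u x ^ 2) ^ 2 :=
    intervalIntegral.integral_nonneg (by norm_num) (fun x _ => sq_nonneg _)
  rw [hsplit, hFzero]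
  linarith
end

section
/- Let β ∈ ℝ with β ∉ {−5/3, −1}, and set θ = (3β+5)/4. Then there exists a constant C > 0, depending only on β, such that for every smooth positive function ρ : 𝕋 → (0,∞) on the one-dimensional torus, ∫_𝕋 |∂ₓ²(ρ^θ)|² dx ≤ C ∫_𝕋 ρ^{(β+3)/2} |∂ₓ²(ρ^{(β+1)/2})|² dx. -/
open intervalIntegral MeasureTheory

private lemma periodic_deriv'' {f : ℝ → ℝ} (hf : Function.Periodic f 1) :
    Function.Periodic (deriv f) 1 := by
  intro x
  have h : (fun y => f (y + 1)) = f := funext hf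
  calc deriv f (x + 1) = deriv (fun y => f (y + 1)) x := (deriv_comp_add_const f 1 x).symm
    _ = deriv f x := by rw [h]

private lemma quad_int (A B : ℝ → ℝ) (hA : Continuous A) (hB : Continuous B) (a b : ℝ) :
    ∫ x in (0:ℝ)..1, (a * A x + b * B x)^2
      = a^2 * (∫ x in (0:ℝ)..1, (A x)^2) + 2*a*b * (∫ x in (0:ℝ)..1, A x * B x)
        + b^2 * (∫ x in (0:ℝ)..1, (B x)^2) := by
  have hA2 : IntervalIntegrable (fun x => a^2 * (A x)^2) volume 0 1 :=
    ((continuous_const.mul (hA.pow 2))).intervalIntegrable _ _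
  have hAB : IntervalIntegrable (fun x => 2*a*b * (A x * B x)) volume 0 1 :=
    ((continuous_const.mul (hA.mul hB))).intervalIntegrable _ _
  have hB2 : IntervalIntegrable (fun x => b^2 * (B x)^2) volume 0 1 :=
    ((continuous_const.mul (hB.pow 2))).intervalIntegrable _ _
  have h : ∀ x : ℝ, (a * A x + b * B x)^2
      = a^2 * (A x)^2 + 2*a*b * (A x * B x) + b^2 * (B x)^2 := by intro x; ring
  simp_rw [h]
  rw [integral_add (hA2.add hAB) hB2, integral_add hA2 hAB,
    intervalIntegral.integral_const_mul, intervalIntegral.integral_const_mul,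
    intervalIntegral.integral_const_mul]

/-- Lemma A.1 of the paper: for `β ∉ {−5/3, −1}` and `θ = (3β+5)/4`, there is
`C = C(β) > 0` with `∫ |∂ₓ²(ρ^θ)|² ≤ C ∫ ρ^{(β+3)/2} |∂ₓ²(ρ^{(β+1)/2})|²`. -/
theorem stmt5 (β : ℝ) (h1 : β ≠ -5 / 3) (h2 : β ≠ -1) :
    ∃ C > (0:ℝ), ∀ ρ : ℝ → ℝ,
      ContDiff ℝ (⊤ : ℕ∞) ρ → (∀ x, 0 < ρ x) → Function.Periodic ρ 1 →
      ∫ x in (0:ℝ)..1, (deriv (deriv (fun y => ρ y ^ ((3 * β + 5) / 4))) x) ^ 2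
        ≤ C * ∫ x in (0:ℝ)..1,
            (ρ x) ^ ((β + 3) / 2) *
              (deriv (deriv (fun y => ρ y ^ ((β + 1) / 2))) x) ^ 2 := by
  have hβ : (3 * β + 5) ≠ 0 := fun hh => h1 (by linarith)
  set θ : ℝ := (3 * β + 5) / 4 with hθdef
  have hθ : θ ≠ 0 := by rw [hθdef]; positivity
  set γ : ℝ := (β + 1) / θ with hγdef
  have hγ : γ ≠ 0 := div_ne_zero (by intro h; exact h2 (by linarith)) hθ
  have h34eq : 3 * γ - 4 = -2 / θ := by
    rw [hγdef]
    field_simp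
    rw [hθdef]; ring
  have h34 : (3 * γ - 4) ≠ 0 := by
    rw [h34eq]
    exact div_ne_zero (by norm_num) hθ
  set m : ℝ := min 1 ((3 * γ - 4) ^ 2) with hmdef
  have hm : 0 < m := lt_min one_pos (by positivity)
  have hm1 : m ≤ 1 := min_le_left _ _
  have hm2 : m ≤ (3 * γ - 4) ^ 2 := min_le_right _ _
  refine ⟨16 / (m * γ ^ 2), by positivity, ?_⟩
  intro ρ hρ hρpos hper
  -- the auxiliary function u = ρ^(θ/2)
  set u : ℝ → ℝ := fun x => ρ x ^ (θ / 2) with hudef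
  have hupos : ∀ x, 0 < u x := fun x => Real.rpow_pos_of_pos (hρpos x) _
  have hu : ContDiff ℝ (⊤ : ℕ∞) u := by
    rw [contDiff_iff_contDiffAt]
    intro x
    exact (hρ.of_le (by simp)).contDiffAt.rpow_const_of_ne (hρpos x).ne'
  set v : ℝ → ℝ := deriv u with hvdef
  set w : ℝ → ℝ := deriv v with hwdef
  have hudiff : Differentiable ℝ u := (contDiff_infty_iff_deriv.mp hu).1
  have hv : ContDiff ℝ (⊤ : ℕ∞) v := (contDiff_infty_iff_deriv.mp hu).2
  have hvdiff : Differentiable ℝ v := (contDiff_infty_iff_deriv.mp hv).1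
  have hwc : Continuous w := (contDiff_infty_iff_deriv.mp hv).2.continuous
  have hud : ∀ x, HasDerivAt u (v x) x := fun x => (hudiff x).hasDerivAt
  have hvd : ∀ x, HasDerivAt v (w x) x := fun x => (hvdiff x).hasDerivAt
  have huc : Continuous u := hu.continuous
  have hvc : Continuous v := hv.continuous
  -- periodicity
  have huper : Function.Periodic u 1 := fun x => by simp only [hudef]; rw [hper x]
  have hvper : Function.Periodic v 1 := periodic_deriv'' huper
  -- the basic quantities
  set A : ℝ → ℝ := fun x => u x * w x with hAdef
  set B : ℝ → ℝ := fun x => v x * v x with hBdef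
  have hAc : Continuous A := huc.mul hwc
  have hBc : Continuous B := hvc.mul hvc
  set P : ℝ := ∫ x in (0:ℝ)..1, (A x)^2 with hPdef
  set Q : ℝ := ∫ x in (0:ℝ)..1, (B x)^2 with hQdef
  set R : ℝ := ∫ x in (0:ℝ)..1, A x * B x with hRdef
  -- pointwise identity for the LHS integrand
  have hfθ : (fun y => ρ y ^ θ) = fun y => (u y)^2 := by
    funext y
    have hy : (u y)^2 = ρ y ^ (θ/2) * ρ y ^ (θ/2) := by simp only [hudef]; ring
    rw [hy, ← Real.rpow_add (hρpos y)]
    norm_num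
  have hd2θ : ∀ x, deriv (deriv (fun y => ρ y ^ θ)) x = 2 * A x + 2 * B x := by
    intro x
    rw [hfθ]
    have hD1 : deriv (fun y => (u y)^2) = fun x => 2 * u x * v x := by
      funext z
      have := ((hud z).pow 2).deriv
      rw [show (fun y => u y ^ 2) = u ^ 2 from rfl, this]; norm_num
    rw [hD1]
    have hD2 : HasDerivAt (fun z => 2 * u z * v z) (2 * (v x * v x) + 2 * (u x * w x)) x := by
      have h := ((hud x).mul (hvd x)).const_mul (2:ℝ)
      have e : (fun z => 2 * u z * v z) = fun z => 2 * (u * v) z := by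
        funext z; simp only [Pi.mul_apply]; ring
      rw [e]; exact h.congr_deriv (by ring)
    rw [hD2.deriv]
    simp only [hAdef, hBdef]
    ring
  -- pointwise identity for the RHS integrand
  have hfγ : (fun y => ρ y ^ ((β + 1) / 2)) = fun y => (u y) ^ γ := by
    funext y
    simp only [hudef]
    rw [← Real.rpow_mul (hρpos y).le]
    congr 1
    rw [hγdef]
    field_simp
  have hgd1 : deriv (fun y => (u y) ^ γ) = fun x => v x * γ * u x ^ (γ - 1) := by
    funext x
    exact ((hud x).rpow_const (Or.inl (hupos x).ne')).deriv
  have hd2γ : ∀ x, deriv (deriv (fun y => (u y) ^ γ)) x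
      = γ * (u x ^ (γ - 2)) * ((γ - 1) * B x + A x) := by
    intro x
    rw [hgd1]
    have h1 : HasDerivAt (fun z => u z ^ (γ - 1)) (v x * (γ-1) * u x ^ (γ - 2)) x := by
      have h := (hud x).rpow_const (p := γ - 1) (Or.inl (hupos x).ne')
      convert h using 2
      ring
    have h : HasDerivAt (fun z => v z * γ * u z ^ (γ - 1))
        (w x * γ * u x ^ (γ-1) + v x * γ * (v x * (γ-1) * u x ^ (γ-2))) x :=
      ((hvd x).mul_const γ).mul h1
    rw [h.deriv]
    have e1 : u x ^ (γ - 1) = u x ^ (γ - 2) * u x := by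
      rw [← Real.rpow_add_one (hupos x).ne' (γ - 2)]
      congr 1
      ring
    rw [e1]
    simp only [hAdef, hBdef]
    ring
  have hweight : ∀ x, (ρ x) ^ ((β + 3) / 2) * (u x ^ (γ - 2))^2 * γ^2 = γ^2 := by
    intro x
    have e1 : (ρ x) ^ ((β + 3) / 2) = u x ^ ((β+3)/θ) := by
      simp only [hudef]
      rw [← Real.rpow_mul (hρpos x).le]
      congr 1
      field_simp
    have e2 : (u x ^ (γ - 2))^2 = u x ^ ((γ-2)*2) := by
      rw [← Real.rpow_natCast (u x ^ (γ-2)) 2, ← Real.rpow_mul (hupos x).le]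
      norm_num
    rw [e1, e2, ← Real.rpow_add (hupos x)]
    have e3 : (β+3)/θ + (γ-2)*2 = 0 := by
      rw [hγdef, hθdef, div_div_eq_mul_div, div_div_eq_mul_div]
      linear_combination 4 * mul_inv_cancel₀ hβ
    rw [e3, Real.rpow_zero]
    ring
  have hRHSpt : ∀ x, (ρ x) ^ ((β + 3) / 2) *
      (deriv (deriv (fun y => ρ y ^ ((β + 1) / 2))) x) ^ 2
      = (γ * A x + (γ*(γ-1)) * B x)^2 := by
    intro x
    rw [hfγ, hd2γ x]
    linear_combination (((γ-1) * B x + A x)^2) * (hweight x)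
  -- the integration by parts identity : Q + 3 R = 0
  have hparts : Q + 3 * R = 0 := by
    have hF : ∀ x ∈ Set.uIcc (0:ℝ) 1, HasDerivAt (fun z => u z * (v z)^3)
        ((B x)^2 + 3 * (A x * B x)) x := by
      intro x _
      have h := (hud x).mul ((hvd x).pow 3)
      refine h.congr_deriv ?_
      simp only [hAdef, hBdef, Pi.pow_apply]
      norm_num
      ring
    have hint : IntervalIntegrable (fun x => (B x)^2 + 3*(A x * B x)) volume 0 1 :=
      ((hBc.pow 2).add (continuous_const.mul (hAc.mul hBc))).intervalIntegrable _ _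
    have hFTC := integral_eq_sub_of_hasDerivAt hF hint
    have hzero : (∫ x in (0:ℝ)..1, ((B x)^2 + 3*(A x * B x))) = 0 := by
      rw [hFTC]
      have hu1 : u 1 = u 0 := by simpa using huper 0
      have hv1 : v 1 = v 0 := by simpa using hvper 0
      rw [hu1, hv1]; ring
    have hsplit : (∫ x in (0:ℝ)..1, ((B x)^2 + 3*(A x * B x))) = Q + 3 * R := by
      rw [integral_add (f := fun x => (B x)^2) (g := fun x => 3*(A x * B x))
        ((hBc.pow 2).intervalIntegrable _ _)
        ((continuous_const.mul (hAc.mul hBc)).intervalIntegrable _ _),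
        intervalIntegral.integral_const_mul]
    rw [← hsplit, hzero]
  -- nonnegativity facts
  have hPne : 0 ≤ P := intervalIntegral.integral_nonneg zero_le_one (fun x _ => sq_nonneg _)
  have hQne : 0 ≤ Q := intervalIntegral.integral_nonneg zero_le_one (fun x _ => sq_nonneg _)
  have hBF : Q ≤ 9 * P := by
    have h0 : (0:ℝ) ≤ ∫ x in (0:ℝ)..1, (3 * A x + 1 * B x)^2 :=
      intervalIntegral.integral_nonneg zero_le_one (fun x _ => sq_nonneg _)
    rw [quad_int A B hAc hBc 3 1, ← hPdef, ← hQdef, ← hRdef] at h0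
    nlinarith [h0, hparts]
  -- rewrite both integrals
  have hLHS : (∫ x in (0:ℝ)..1, (deriv (deriv (fun y => ρ y ^ θ)) x) ^ 2)
      = 4 * P + 8 * R + 4 * Q := by
    have hpt : ∀ x ∈ Set.uIcc (0:ℝ) 1, (deriv (deriv (fun y => ρ y ^ θ)) x) ^ 2
        = (2 * A x + 2 * B x)^2 := fun x _ => by rw [hd2θ x]
    rw [intervalIntegral.integral_congr hpt, quad_int A B hAc hBc 2 2,
      ← hPdef, ← hQdef, ← hRdef]
    ring
  have hRHS : (∫ x in (0:ℝ)..1, (ρ x) ^ ((β + 3) / 2) *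
      (deriv (deriv (fun y => ρ y ^ ((β + 1) / 2))) x) ^ 2)
      = γ^2 * P + 2*γ*(γ*(γ-1)) * R + (γ*(γ-1))^2 * Q := by
    rw [intervalIntegral.integral_congr (fun x _ => hRHSpt x),
      quad_int A B hAc hBc γ (γ*(γ-1)), ← hPdef, ← hQdef, ← hRdef]
  rw [hLHS, hRHS]
  have hC : 16 / (m * γ^2) * (γ^2 * P + 2*γ*(γ*(γ-1)) * R + (γ*(γ-1))^2 * Q)
      = 16 / m * (P + 2*(γ-1) * R + (γ-1)^2 * Q) := by
    field_simp
  rw [hC]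
  -- final scalar inequality
  have hRval : R = -(Q/3) := by linarith
  rw [hRval, div_mul_eq_mul_div, le_div_iff₀ hm]
  have hh1 : 0 ≤ ((3*γ-4)^2 - m) * Q := mul_nonneg (by linarith) hQne
  have hh2 : 0 ≤ (9*P - Q) * (16 - 4*m) := mul_nonneg (by linarith) (by linarith)
  nlinarith [hh1, hh2]
end

section
/- Let β ≠ −1 and let ρ : 𝕋 → (0,∞) be smooth and positive. Then pointwise ρ ∂ₓ( ∂ₓ(ρ^β ∂ₓρ) − (β/2) ρ^{β−1} |∂ₓρ|² ) = (2/(β+1)) ∂ₓ( ρ^{(β+3)/2} ∂ₓ²(ρ^{(β+1)/2}) ). -/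
open scoped ContDiff

/-- The identity `ρ ∂ₓ(∂ₓ(ρ^β ∂ₓρ) − (β/2)ρ^{β−1}|∂ₓρ|²)
= (2/(β+1)) ∂ₓ(ρ^{(β+3)/2} ∂ₓ²(ρ^{(β+1)/2}))`, pointwise. -/
theorem stmt7 (β : ℝ) (hβ : β ≠ -1) (ρ : ℝ → ℝ)
    (hρ : ContDiff ℝ (⊤ : ℕ∞) ρ) (hpos : ∀ x, 0 < ρ x) (hper : Function.Periodic ρ 1) :
    ∀ x : ℝ,
      ρ x * deriv (fun y =>
          deriv (fun z => ρ z ^ β * deriv ρ z) y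
            - β / 2 * ρ y ^ (β - 1) * (deriv ρ y) ^ 2) x
        = (2 / (β + 1)) *
            deriv (fun y =>
              ρ y ^ ((β + 3) / 2) * deriv (deriv (fun z => ρ z ^ ((β + 1) / 2))) y) x := by
  intro x
  have hinf : ContDiff ℝ ∞ ρ := hρ.of_le (by simp)
  have hd : Differentiable ℝ ρ := hinf.differentiable (by simp)
  have hd1 : Differentiable ℝ (deriv ρ) := by
    have h2 : ContDiff ℝ ∞ (deriv^[1] ρ) := ContDiff.iterate_deriv 1 hinf
    simpa using h2.differentiable (by simp)
  have hd2 : Differentiable ℝ (deriv (deriv ρ)) := by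
    have h2 : ContDiff ℝ ∞ (deriv^[2] ρ) := ContDiff.iterate_deriv 2 hinf
    simpa using h2.differentiable (by simp)
  have hne : ∀ y, ρ y ≠ 0 := fun y => (hpos y).ne'
  have hpow : ∀ (a : ℝ) (y : ℝ),
      HasDerivAt (fun z => ρ z ^ a) (deriv ρ y * a * ρ y ^ (a - 1)) y :=
    fun a y => (hd y).hasDerivAt.rpow_const (Or.inl (hne y))
  -- Left side: expand the inner derivative
  have hL1 : deriv (fun z => ρ z ^ β * deriv ρ z)
      = fun y => deriv ρ y * β * ρ y ^ (β - 1) * deriv ρ y + ρ y ^ β * deriv (deriv ρ) y :=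
    funext fun y => ((hpow β y).mul (hd1 y).hasDerivAt).deriv
  simp only [hL1]
  -- Right side: expand the inner derivatives
  have hR1 : deriv (fun z => ρ z ^ ((β + 1) / 2))
      = fun y => deriv ρ y * ((β + 1) / 2) * ρ y ^ ((β + 1) / 2 - 1) :=
    funext fun y => (hpow ((β + 1) / 2) y).deriv
  have hR2 : deriv (fun y => deriv ρ y * ((β + 1) / 2) * ρ y ^ ((β + 1) / 2 - 1))
      = fun y => deriv (deriv ρ) y * ((β + 1) / 2) * ρ y ^ ((β + 1) / 2 - 1)
          + deriv ρ y * ((β + 1) / 2)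
            * (deriv ρ y * ((β + 1) / 2 - 1) * ρ y ^ ((β + 1) / 2 - 1 - 1)) :=
    funext fun y =>
      (((hd1 y).hasDerivAt.mul_const ((β + 1) / 2)).mul (hpow ((β + 1) / 2 - 1) y)).deriv
  simp only [hR1, hR2]
  -- rewrite the right-hand function into a clean form
  have hG : (fun y : ℝ => ρ y ^ ((β + 3) / 2)
        * (deriv (deriv ρ) y * ((β + 1) / 2) * ρ y ^ ((β + 1) / 2 - 1)
          + deriv ρ y * ((β + 1) / 2)
            * (deriv ρ y * ((β + 1) / 2 - 1) * ρ y ^ ((β + 1) / 2 - 1 - 1))))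
      = fun y => (β + 1) / 2 * ρ y ^ (β + 1) * deriv (deriv ρ) y
          + (β + 1) / 2 * ((β + 1) / 2 - 1) * ρ y ^ β * deriv ρ y ^ 2 := by
    funext y
    have e1 : ρ y ^ ((β + 3) / 2) * ρ y ^ ((β + 1) / 2 - 1) = ρ y ^ (β + 1) := by
      rw [← Real.rpow_add (hpos y)]; congr 1; ring
    have e2 : ρ y ^ ((β + 3) / 2) * ρ y ^ ((β + 1) / 2 - 1 - 1) = ρ y ^ β := by
      rw [← Real.rpow_add (hpos y)]; congr 1; ring
    rw [← e1, ← e2]; ring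
  rw [hG]
  -- differentiate both explicit functions
  have hLd : deriv (fun y => deriv ρ y * β * ρ y ^ (β - 1) * deriv ρ y
        + ρ y ^ β * deriv (deriv ρ) y
        - β / 2 * ρ y ^ (β - 1) * deriv ρ y ^ 2) x = _ :=
    ((((((hd1 x).hasDerivAt.mul_const β).mul (hpow (β - 1) x)).mul
          (hd1 x).hasDerivAt).add
        ((hpow β x).mul (hd2 x).hasDerivAt)).sub
      (((hpow (β - 1) x).const_mul (β / 2)).mul ((hd1 x).hasDerivAt.pow 2))).deriv
  have hGd : deriv (fun y => (β + 1) / 2 * ρ y ^ (β + 1) * deriv (deriv ρ) y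
        + (β + 1) / 2 * ((β + 1) / 2 - 1) * ρ y ^ β * deriv ρ y ^ 2) x = _ :=
    ((((hpow (β + 1) x).const_mul ((β + 1) / 2)).mul (hd2 x).hasDerivAt).add
      (((hpow β x).const_mul ((β + 1) / 2 * ((β + 1) / 2 - 1))).mul
        ((hd1 x).hasDerivAt.pow 2))).deriv
  rw [hLd, hGd]
  -- collapse the rpow exponents
  rw [show β + 1 - 1 = β from by ring]
  have hP1 : ρ x ^ (β + 1) = ρ x ^ β * ρ x := Real.rpow_add_one (hne x) β
  have hP2 : ρ x ^ β = ρ x ^ (β - 1) * ρ x := by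
    have h := Real.rpow_add_one (hne x) (β - 1)
    rwa [show β - 1 + 1 = β from by ring] at h
  have hP3 : ρ x ^ (β - 1) = ρ x ^ (β - 1 - 1) * ρ x := by
    have h := Real.rpow_add_one (hne x) (β - 1 - 1)
    rwa [show β - 1 - 1 + 1 = β - 1 from by ring] at h
  simp only [Pi.pow_apply, Pi.mul_apply]
  rw [hP1, hP2, hP3]
  have hβ1 : β + 1 ≠ 0 := fun h => hβ (by linarith)
  field_simp
  ring
end

section
/- Let ρ : 𝕋 → (0,∞) be smooth and positive on the 1D torus and μ : (0,∞) → ℝ smooth with μ'> 0. Then ∫_𝕋 (μ'(ρ)/ρ) |∂ₓ(μ'(ρ)∂ₓρ)|² dx + ∫_𝕋 (μ'(ρ))³ |∂ₓρ|⁴ / ρ³ dx = ∫_𝕋 ρ μ'(ρ) |∂ₓ²(φ(ρ))|² dx − 4 ∫_𝕋 (μ'(ρ))² |∂ₓρ|² ρ^{−1} ∂ₓ²(φ(ρ)) dx, where φ satisfies ρφ'(ρ) = μ'(ρ). -/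
/-- The expanded-square identity in the proof of Lemma 3.2:
`∫ (μ'(ρ)/ρ)|∂ₓ(μ'(ρ)∂ₓρ)|² + ∫ (μ'(ρ))³|∂ₓρ|⁴/ρ³
 = ∫ ρμ'(ρ)|∂ₓ²(φ(ρ))|² − 4∫ (μ'(ρ))²|∂ₓρ|² ρ⁻¹ ∂ₓ²(φ(ρ))`. -/
theorem stmt18 (ρ φ μ : ℝ → ℝ)
    (hρ : ContDiff ℝ (⊤ : ℕ∞) ρ) (hpos : ∀ x, 0 < ρ x) (hper : Function.Periodic ρ 1)
    (hφ : ContDiffOn ℝ (⊤ : ℕ∞) φ (Set.Ioi 0)) (hμ : ContDiffOn ℝ (⊤ : ℕ∞) μ (Set.Ioi 0))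
    (hμ' : ∀ s > (0:ℝ), deriv μ s = s * deriv φ s)
    (hμpos : ∀ s > (0:ℝ), 0 < deriv μ s) :
    (∫ x in (0:ℝ)..1,
        (deriv μ (ρ x) / ρ x) * (deriv (fun y => deriv μ (ρ y) * deriv ρ y) x) ^ 2)
      + (∫ x in (0:ℝ)..1, (deriv μ (ρ x)) ^ 3 * (deriv ρ x) ^ 4 / (ρ x) ^ 3)
      = (∫ x in (0:ℝ)..1,
          ρ x * deriv μ (ρ x) * (deriv (deriv (fun z => φ (ρ z))) x) ^ 2)
        - 4 * ∫ x in (0:ℝ)..1,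
            (deriv μ (ρ x)) ^ 2 * (deriv ρ x) ^ 2 * (ρ x)⁻¹ *
              deriv (deriv (fun z => φ (ρ z))) x := by
  have htop : ((⊤:ℕ∞) : WithTop ℕ∞) ≤ (⊤ : WithTop ℕ∞) := le_top
  -- regularity of deriv μ, deriv φ, etc. on Ioi 0
  have hμ1 : ContDiffOn ℝ (⊤ : ℕ∞) (deriv μ) (Set.Ioi 0) :=
    hμ.deriv_of_isOpen isOpen_Ioi (by simp)
  have hμ2 : ContDiffOn ℝ (⊤ : ℕ∞) (deriv (deriv μ)) (Set.Ioi 0) :=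
    hμ1.deriv_of_isOpen isOpen_Ioi (by simp)
  have hφ1 : ContDiffOn ℝ (⊤ : ℕ∞) (deriv φ) (Set.Ioi 0) :=
    hφ.deriv_of_isOpen isOpen_Ioi (by simp)
  have hφ2 : ContDiffOn ℝ (⊤ : ℕ∞) (deriv (deriv φ)) (Set.Ioi 0) :=
    hφ1.deriv_of_isOpen isOpen_Ioi (by simp)
  have hmem : ∀ x : ℝ, Set.Ioi (0:ℝ) ∈ nhds (ρ x) := fun x =>
    isOpen_Ioi.mem_nhds (hpos x)
  -- ρ derivatives
  have hρi : ContDiff ℝ ((⊤ : ℕ∞) : WithTop ℕ∞) ρ := hρ.of_le (by simp)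
  have hρ1 : ContDiff ℝ ((⊤ : ℕ∞) : WithTop ℕ∞) (deriv ρ) := (contDiff_infty_iff_deriv.mp hρi).2
  have hρ2 : ContDiff ℝ ((⊤ : ℕ∞) : WithTop ℕ∞) (deriv (deriv ρ)) :=
    (contDiff_infty_iff_deriv.mp hρ1).2
  have hρd : ∀ x : ℝ, HasDerivAt ρ (deriv ρ x) x := fun x =>
    (hρ.differentiable (by simp) x).hasDerivAt
  have hρ1d : ∀ x : ℝ, HasDerivAt (deriv ρ) (deriv (deriv ρ) x) x := fun x =>
    (hρ1.differentiable (by simp) x).hasDerivAt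
  -- pointwise differentiability of compositions
  have hm : ∀ x : ℝ, HasDerivAt (fun y => deriv μ (ρ y))
      (deriv (deriv μ) (ρ x) * deriv ρ x) x := fun x =>
    (((hμ1.contDiffAt (hmem x)).differentiableAt (by simp)).hasDerivAt).comp x (hρd x)
  have hp : ∀ x : ℝ, HasDerivAt (fun y => deriv φ (ρ y))
      (deriv (deriv φ) (ρ x) * deriv ρ x) x := fun x =>
    (((hφ1.contDiffAt (hmem x)).differentiableAt (by simp)).hasDerivAt).comp x (hρd x)
  -- deriv of φ ∘ ρ
  have hφρ : deriv (fun z => φ (ρ z)) = fun z => deriv φ (ρ z) * deriv ρ z := by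
    funext z
    exact ((((hφ.contDiffAt (hmem z)).differentiableAt (by simp)).hasDerivAt).comp z
      (hρd z)).deriv
  -- second derivative of φ ∘ ρ
  have hB : ∀ x : ℝ, deriv (deriv (fun z => φ (ρ z))) x
      = deriv (deriv φ) (ρ x) * (deriv ρ x) ^ 2 + deriv φ (ρ x) * deriv (deriv ρ) x := by
    intro x
    rw [hφρ]
    have := ((hp x).fun_mul (hρ1d x)).deriv
    rw [this]; ring
  -- derivative of A-function
  have hA : ∀ x : ℝ, deriv (fun y => deriv μ (ρ y) * deriv ρ y) x
      = deriv (deriv μ) (ρ x) * (deriv ρ x) ^ 2 + deriv μ (ρ x) * deriv (deriv ρ) x := by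
    intro x
    have := ((hm x).fun_mul (hρ1d x)).deriv
    rw [this]; ring
  -- relation: μ'' = φ' + s φ'' on Ioi 0
  have hrel : ∀ s > (0:ℝ), deriv (deriv μ) s = deriv φ s + s * deriv (deriv φ) s := by
    intro s hs
    have hev : deriv μ =ᶠ[nhds s] (fun t => t * deriv φ t) := by
      filter_upwards [isOpen_Ioi.mem_nhds hs] with t ht using hμ' t ht
    rw [hev.deriv_eq]
    rw [deriv_fun_mul differentiableAt_fun_id
      ((hφ1.contDiffAt (isOpen_Ioi.mem_nhds hs)).differentiableAt (by simp))]
    simp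
  -- abbreviations
  set p : ℝ → ℝ := fun x => deriv φ (ρ x) with hpdef
  set q : ℝ → ℝ := fun x => deriv (deriv φ) (ρ x) with hqdef
  -- the exact-derivative function G and its derivative g
  set G : ℝ → ℝ := fun x => -2 * (ρ x * (p x) ^ 3 * (deriv ρ x) ^ 3) with hGdef
  set g : ℝ → ℝ := fun x =>
    -2 * (deriv ρ x * (p x) ^ 3 * (deriv ρ x) ^ 3
      + ρ x * (3 * (p x) ^ 2 * (q x * deriv ρ x)) * (deriv ρ x) ^ 3
      + ρ x * (p x) ^ 3 * (3 * (deriv ρ x) ^ 2 * deriv (deriv ρ) x)) with hgdef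
  have hG : ∀ x : ℝ, HasDerivAt G (g x) x := by
    intro x
    have h1 : HasDerivAt (fun y => (p y) ^ 3) (3 * (p x) ^ 2 * (q x * deriv ρ x)) x := by
      simpa using (hp x).fun_pow 3
    have h2 : HasDerivAt (fun y => (deriv ρ y) ^ 3)
        (3 * (deriv ρ x) ^ 2 * deriv (deriv ρ) x) x := by
      simpa using (hρ1d x).fun_pow 3
    have := (((hρd x).fun_mul h1).fun_mul h2).const_mul (-2 : ℝ)
    refine this.congr_deriv ?_
    simp only [hgdef]; ring
  -- continuity facts
  have hcontm : Continuous (fun x => deriv μ (ρ x)) := by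
    rw [continuous_iff_continuousAt]
    exact fun x => (hμ1.contDiffAt (hmem x)).continuousAt.comp
      (hρ.continuous.continuousAt)
  have hcontp : Continuous p := by
    rw [continuous_iff_continuousAt]
    exact fun x => (hφ1.contDiffAt (hmem x)).continuousAt.comp
      (hρ.continuous.continuousAt)
  have hcontq : Continuous q := by
    rw [continuous_iff_continuousAt]
    exact fun x => (hφ2.contDiffAt (hmem x)).continuousAt.comp
      (hρ.continuous.continuousAt)
  have hcontm2 : Continuous (fun x => deriv (deriv μ) (ρ x)) := by
    rw [continuous_iff_continuousAt]
    exact fun x => (hμ2.contDiffAt (hmem x)).continuousAt.comp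
      (hρ.continuous.continuousAt)
  have hcρ : Continuous ρ := hρ.continuous
  have hcρ1 : Continuous (deriv ρ) := hρ1.continuous
  have hcρ2 : Continuous (deriv (deriv ρ)) := hρ2.continuous
  have hρne : ∀ x, ρ x ≠ 0 := fun x => (hpos x).ne'
  -- continuity of the four integrands and g
  have hcA : Continuous (fun x => deriv (fun y => deriv μ (ρ y) * deriv ρ y) x) := by
    have : (fun x => deriv (fun y => deriv μ (ρ y) * deriv ρ y) x)
        = fun x => deriv (deriv μ) (ρ x) * (deriv ρ x) ^ 2 + deriv μ (ρ x) * deriv (deriv ρ) x :=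
      funext hA
    rw [this]; fun_prop
  have hcB : Continuous (fun x => deriv (deriv (fun z => φ (ρ z))) x) := by
    have : (fun x => deriv (deriv (fun z => φ (ρ z))) x)
        = fun x => q x * (deriv ρ x) ^ 2 + p x * deriv (deriv ρ) x := funext hB
    rw [this]; fun_prop
  have hI1 : IntervalIntegrable (fun x =>
      (deriv μ (ρ x) / ρ x) * (deriv (fun y => deriv μ (ρ y) * deriv ρ y) x) ^ 2)
      MeasureTheory.volume 0 1 := by
    apply Continuous.intervalIntegrable
    exact (hcontm.div hcρ hρne).mul (hcA.pow 2)
  have hI2 : IntervalIntegrable (fun x =>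
      (deriv μ (ρ x)) ^ 3 * (deriv ρ x) ^ 4 / (ρ x) ^ 3) MeasureTheory.volume 0 1 := by
    apply Continuous.intervalIntegrable
    exact ((hcontm.pow 3).mul (hcρ1.pow 4)).div (hcρ.pow 3) (fun x => pow_ne_zero _ (hρne x))
  have hI3 : IntervalIntegrable (fun x =>
      ρ x * deriv μ (ρ x) * (deriv (deriv (fun z => φ (ρ z))) x) ^ 2)
      MeasureTheory.volume 0 1 := by
    apply Continuous.intervalIntegrable
    exact (hcρ.mul hcontm).mul (hcB.pow 2)
  have hI4 : IntervalIntegrable (fun x =>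
      (deriv μ (ρ x)) ^ 2 * (deriv ρ x) ^ 2 * (ρ x)⁻¹ *
        deriv (deriv (fun z => φ (ρ z))) x) MeasureTheory.volume 0 1 := by
    apply Continuous.intervalIntegrable
    exact (((hcontm.pow 2).mul (hcρ1.pow 2)).mul (hcρ.inv₀ hρne)).mul hcB
  have hIg : IntervalIntegrable g MeasureTheory.volume 0 1 := by
    apply Continuous.intervalIntegrable
    simp only [hgdef]; fun_prop
  -- ∫ g = G 1 - G 0 = 0
  have hGper : G 1 = G 0 := by
    have hρ01 : ρ 1 = ρ 0 := by simpa using hper 0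
    have hderper : deriv ρ 1 = deriv ρ 0 := by
      have : (fun y => ρ (y + 1)) = ρ := funext fun y => hper y
      calc deriv ρ 1 = deriv (fun y => ρ (y + 1)) 0 := by
            rw [deriv_comp_add_const]; norm_num
        _ = deriv ρ 0 := by rw [this]
    simp only [hGdef, hpdef, hρ01, hderper]
  have hg0 : (∫ x in (0:ℝ)..1, g x) = 0 := by
    rw [intervalIntegral.integral_eq_sub_of_hasDerivAt (fun x _ => hG x) hIg, hGper,
      sub_self]
  -- pointwise identity
  have hkey : ∀ x : ℝ,
      (deriv μ (ρ x) / ρ x) * (deriv (fun y => deriv μ (ρ y) * deriv ρ y) x) ^ 2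
        + (deriv μ (ρ x)) ^ 3 * (deriv ρ x) ^ 4 / (ρ x) ^ 3
      = ρ x * deriv μ (ρ x) * (deriv (deriv (fun z => φ (ρ z))) x) ^ 2
        - 4 * ((deriv μ (ρ x)) ^ 2 * (deriv ρ x) ^ 2 * (ρ x)⁻¹ *
            deriv (deriv (fun z => φ (ρ z))) x)
        - g x := by
    intro x
    have hmval : deriv μ (ρ x) = ρ x * p x := hμ' (ρ x) (hpos x)
    have hm2val : deriv (deriv μ) (ρ x) = p x + ρ x * q x := hrel (ρ x) (hpos x)
    rw [hA x, hB x, hmval, hm2val]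
    have h0 := hρne x
    simp only [hgdef, hpdef, hqdef]
    field_simp
    ring
  -- assemble
  have hsum : (∫ x in (0:ℝ)..1,
      ((deriv μ (ρ x) / ρ x) * (deriv (fun y => deriv μ (ρ y) * deriv ρ y) x) ^ 2
        + (deriv μ (ρ x)) ^ 3 * (deriv ρ x) ^ 4 / (ρ x) ^ 3))
      = ∫ x in (0:ℝ)..1,
        (ρ x * deriv μ (ρ x) * (deriv (deriv (fun z => φ (ρ z))) x) ^ 2
          - 4 * ((deriv μ (ρ x)) ^ 2 * (deriv ρ x) ^ 2 * (ρ x)⁻¹ *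
              deriv (deriv (fun z => φ (ρ z))) x)
          - g x) :=
    intervalIntegral.integral_congr (fun x _ => hkey x)
  rw [← intervalIntegral.integral_add hI1 hI2, hsum,
    intervalIntegral.integral_sub (hI3.sub (hI4.const_mul 4)) hIg, hg0,
    intervalIntegral.integral_sub hI3 (hI4.const_mul 4),
    intervalIntegral.integral_const_mul]
  ring
end
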